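/- (Gaussian corollary of Theorem 2) Let d ≥ 1, let θ ∈ ℝ^d, and let p* = N(θ, I_d) be the standard Gaussian measure on ℝ^d with mean θ and identity covariance (the product of d one-dimensional standard Gaussians shifted by θ). Let p be a Borel probability measure on ℝ^d with TV(p, p*) ≤ ε where ε < 1/4, and let x be a Tukey median of p. Then Φ(‖x − θ‖) ≤ 1/2 + 2ε, where Φ is the cumulative distribution function of the one-dimensional standard normal distribution; in particular the Tukey median attains estimation error O(ε) for robust Gaussian mean estimation. -/

import Mathlib

open MeasureTheory
open scoped RealInnerProductSpace ENNReal

noncomputable section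

abbrev Euc (d : ℕ) := EuclideanSpace ℝ (Fin d)

/-- Tukey depth of a point `μ` w.r.t. a measure `p`: the infimum over nonzero
directions `v` of the mass of the halfspace `{x | ⟪v, x - μ⟫ ≥ 0}`. -/
def tukeyDepth {d : ℕ} (μ : Euc d) (p : Measure (Euc d)) : ℝ :=
  ⨅ v : {v : Euc d // v ≠ 0}, (p {x | 0 ≤ ⟪(v : Euc d), x - μ⟫}).toReal

/-- `x` is a Tukey median of `p` if it maximizes the Tukey depth. -/
def IsTukeyMedian {d : ℕ} (x : Euc d) (p : Measure (Euc d)) : Prop :=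
  ∀ y : Euc d, tukeyDepth y p ≤ tukeyDepth x p

/-- Total variation distance: supremum over Borel sets `A` of `p A - q A`. -/
def tvDist {d : ℕ} (p q : Measure (Euc d)) : ℝ :=
  ⨆ A : {A : Set (Euc d) // MeasurableSet A}, ((p A).toReal - (q A).toReal)

/-- The halfspace metric `TV~(p, q)`. -/
def halfspaceDist {d : ℕ} (p q : Measure (Euc d)) : ℝ :=
  ⨆ vt : Euc d × ℝ,
    |(p {x | vt.2 ≤ ⟪vt.1, x⟫}).toReal - (q {x | vt.2 ≤ ⟪vt.1, x⟫}).toReal|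

/-- Halfspace symmetry around `μ`: every one-dimensional projection of `X - μ`
is symmetric in distribution. -/
def IsHalfspaceSymmetric {d : ℕ} (p : Measure (Euc d)) (μ : Euc d) : Prop :=
  ∀ v : Euc d,
    p.map (fun x => ⟪v, x - μ⟫) = p.map (fun x => -⟪v, x - μ⟫)

/-- Decay function `h(t)` of a measure `p` centered at `μ`. -/
def decay {d : ℕ} (p : Measure (Euc d)) (μ : Euc d) (t : ℝ) : ℝ :=
  ⨆ v : {v : Euc d // ‖v‖ ≤ 1}, (p {x | t < ⟪(v : Euc d), x - μ⟫}).toReal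

/-! Every projection of `N(θ, I)` onto a unit vector `u` is `N(⟪u, θ⟫, 1)`. Hence each closed
halfspace bounded by a hyperplane through `θ` has Gaussian mass `1/2`, while the halfspace
`{y | ⟪x - θ, y - x⟫ ≥ 0}` beyond `x` has mass `1 - Φ(‖x - θ‖)`. Passing from `N(θ, I)` to `p`
changes each of these masses by at most `ε`, so
`1/2 - ε ≤ D(θ, p) ≤ D(x, p) ≤ 1 - Φ(‖x - θ‖) + ε`. -/

open ProbabilityTheory Set
open scoped NNReal

section TotalVariation

variable {d : ℕ} {p q : Measure (Euc d)} {A : Set (Euc d)}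

lemma measureReal_sub_le_tvDist [IsFiniteMeasure p] (hA : MeasurableSet A) :
    p.real A - q.real A ≤ tvDist p q := by
  have hbdd : BddAbove (range fun B : {A : Set (Euc d) // MeasurableSet A} =>
      (p B).toReal - (q B).toReal) := by
    refine ⟨p.real univ, ?_⟩
    rintro _ ⟨B, rfl⟩
    change p.real B - q.real B ≤ _
    linarith [measureReal_mono (μ := p) (subset_univ (B : Set (Euc d))),
      measureReal_nonneg (μ := q) (s := B)]
  exact le_ciSup hbdd ⟨A, hA⟩

lemma tvDist_nonneg [IsFiniteMeasure p] : 0 ≤ tvDist p q := by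
  simpa using measureReal_sub_le_tvDist (p := p) (q := q) MeasurableSet.empty

lemma measureReal_sub_le_tvDist_rev [IsProbabilityMeasure p] [IsProbabilityMeasure q]
    (hA : MeasurableSet A) : q.real A - p.real A ≤ tvDist p q := by
  have h := measureReal_sub_le_tvDist (p := p) (q := q) hA.compl
  rw [probReal_compl_eq_one_sub hA, probReal_compl_eq_one_sub hA] at h
  linarith

end TotalVariation

section TukeyDepth

variable {d : ℕ} {μ : Euc d} {p : Measure (Euc d)}

lemma measurableSet_halfspace (v c : Euc d) : MeasurableSet {x : Euc d | 0 ≤ ⟪v, x - c⟫} :=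
  measurableSet_le measurable_const (by fun_prop)

lemma tukeyDepth_le {v : Euc d} (hv : v ≠ 0) :
    tukeyDepth μ p ≤ p.real {x | 0 ≤ ⟪v, x - μ⟫} :=
  ciInf_le ⟨0, by rintro _ ⟨w, rfl⟩; exact ENNReal.toReal_nonneg⟩ (⟨v, hv⟩ : {v : Euc d // v ≠ 0})

lemma le_tukeyDepth [Nontrivial (Euc d)] {c : ℝ}
    (h : ∀ v : Euc d, v ≠ 0 → c ≤ p.real {x | 0 ≤ ⟪v, x - μ⟫}) : c ≤ tukeyDepth μ p := by
  have : Nonempty {v : Euc d // v ≠ 0} := nonempty_subtype.2 (exists_ne 0)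
  exact le_ciInf fun v => h v v.2

end TukeyDepth

section GaussianReal

lemma measureReal_gaussianReal_Iic (r : ℝ) :
    (gaussianReal 0 1).real (Iic r) =
      ∫ s in Iic r, Real.exp (-s ^ 2 / 2) / Real.sqrt (2 * Real.pi) := by
  rw [measureReal_def, gaussianReal_apply_eq_integral 0 one_ne_zero,
    ENNReal.toReal_ofReal (setIntegral_nonneg measurableSet_Iic
      fun s _ => gaussianPDFReal_nonneg 0 1 s)]
  refine setIntegral_congr_fun measurableSet_Iic fun s _ => ?_
  simp [gaussianPDFReal, div_eq_inv_mul]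

lemma measureReal_gaussianReal_Iic_neg {v : ℝ≥0} (hv : v ≠ 0) (r : ℝ) :
    (gaussianReal 0 v).real (Iic (-r)) = 1 - (gaussianReal 0 v).real (Iic r) := by
  have := nullSingletonClass_gaussianReal (μ := 0) hv
  calc (gaussianReal 0 v).real (Iic (-r))
      = ((gaussianReal 0 v).map (fun x => -x)).real (Iic (-r)) := by
        rw [gaussianReal_map_neg, neg_zero]
    _ = (gaussianReal 0 v).real (Iio r)ᶜ := by
        rw [map_measureReal_apply measurable_neg measurableSet_Iic, compl_Iio]
        congr 1
        ext x
        simp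
    _ = 1 - (gaussianReal 0 v).real (Iic r) := by
        rw [probReal_compl_eq_one_sub measurableSet_Iio, measureReal_congr Iio_ae_eq_Iic]

lemma measureReal_gaussianReal_Iic_zero {v : ℝ≥0} (hv : v ≠ 0) :
    (gaussianReal 0 v).real (Iic 0) = 1 / 2 := by
  have := measureReal_gaussianReal_Iic_neg hv 0
  rw [neg_zero] at this
  linarith

lemma measureReal_gaussianReal_Ici (m a : ℝ) (v : ℝ≥0) :
    (gaussianReal m v).real (Ici a) = (gaussianReal 0 v).real (Iic (m - a)) := by
  rw [show gaussianReal m v = (gaussianReal 0 v).map (m - ·) by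
      rw [gaussianReal_map_const_sub, sub_zero],
    map_measureReal_apply (by fun_prop) measurableSet_Ici]
  congr 1
  ext s
  simp

end GaussianReal

section StdGaussian

variable {E : Type*} [NormedAddCommGroup E] [InnerProductSpace ℝ E] [FiniteDimensional ℝ E]
  [MeasurableSpace E] [BorelSpace E]

lemma map_toLp_pi_gaussianReal {ι : Type*} [Fintype ι] (θ : EuclideanSpace ℝ ι) :
    (Measure.pi fun i => gaussianReal (θ i) 1).map (WithLp.toLp 2) =
      (stdGaussian (EuclideanSpace ℝ ι)).map (· + θ) := by
  have hpi : Measure.pi (fun i => gaussianReal (θ i) 1) =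
      (Measure.pi fun _ : ι => gaussianReal 0 1).map (fun z i => z i + θ i) := by
    rw [Measure.pi_map_pi fun _ => (measurable_add_const _).aemeasurable]
    simp_rw [gaussianReal_map_add_const, zero_add]
  rw [hpi, ← map_pi_eq_stdGaussian, Measure.map_map (by fun_prop) (by fun_prop),
    Measure.map_map (by fun_prop) (by fun_prop)]
  rfl

lemma map_inner_map_add_stdGaussian {u : E} (hu : ‖u‖ = 1) (θ : E) :
    ((stdGaussian E).map (· + θ)).map (fun y => ⟪u, y⟫) = gaussianReal ⟪u, θ⟫ 1 := by
  have hstd : (stdGaussian E).map (innerSL ℝ u) = gaussianReal 0 1 := by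
    rw [IsGaussian.map_eq_gaussianReal, integral_strongDual_stdGaussian,
      variance_dual_stdGaussian, innerSL_apply_norm, hu]
    simp
  rw [Measure.map_map (by fun_prop) (by fun_prop)]
  have : (fun y => ⟪u, y⟫) ∘ (· + θ) = (· + ⟪u, θ⟫) ∘ innerSL ℝ u := by
    ext y; simp [inner_add_right]
  rw [this, ← Measure.map_map (by fun_prop) (by fun_prop), hstd, gaussianReal_map_add_const,
    zero_add]

lemma measureReal_map_add_stdGaussian_halfspace {v : E} (hv : v ≠ 0) (θ c : E) :
    ((stdGaussian E).map (· + θ)).real {y | 0 ≤ ⟪v, y - c⟫} =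
      (gaussianReal 0 1).real (Iic (⟪v, θ - c⟫ / ‖v‖)) := by
  have hv' : 0 < ‖v‖ := norm_pos_iff.2 hv
  set u := ‖v‖⁻¹ • v
  have hu : ‖u‖ = 1 := by simp [u, norm_smul, hv'.ne']
  have hset : {y | 0 ≤ ⟪v, y - c⟫} = (fun y => ⟪u, y⟫) ⁻¹' Ici ⟪u, c⟫ := by
    ext y
    simp [u, real_inner_smul_left, inner_sub_right, sub_nonneg, inv_pos.2 hv']
  rw [hset, ← map_measureReal_apply (by fun_prop) measurableSet_Ici,
    map_inner_map_add_stdGaussian hu, measureReal_gaussianReal_Ici, ← inner_sub_right,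
    real_inner_smul_left, inv_mul_eq_div]

end StdGaussian

theorem tukey_median_gaussian_general {d : ℕ} (θ : Euc d)
    (pstar : Measure (Euc d))
    (hpstar : pstar =
      Measure.map (MeasurableEquiv.toLp 2 (Fin d → ℝ))
        (Measure.pi fun i : Fin d => ProbabilityTheory.gaussianReal (θ i) 1))
    (p : Measure (Euc d)) [IsProbabilityMeasure p]
    (ε : ℝ) (htv : tvDist p pstar ≤ ε)
    (x : Euc d) (hx : IsTukeyMedian x p) :
    (∫ s in Set.Iic ‖x - θ‖, Real.exp (-s ^ 2 / 2) / Real.sqrt (2 * Real.pi))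
      ≤ 1 / 2 + 2 * ε := by
  rw [MeasurableEquiv.coe_toLp, map_toLp_pi_gaussianReal] at hpstar
  have : IsProbabilityMeasure pstar := hpstar ▸ inferInstance
  rw [← measureReal_gaussianReal_Iic]
  obtain rfl | hxθ := eq_or_ne x θ
  · rw [sub_self, norm_zero, measureReal_gaussianReal_Iic_zero one_ne_zero]
    linarith [tvDist_nonneg (p := p) (q := pstar)]
  have : Nontrivial (Euc d) := nontrivial_of_ne x θ hxθ
  have hdepthθ : 1 / 2 - ε ≤ tukeyDepth θ p := le_tukeyDepth fun v hv => by
    have hmass := measureReal_map_add_stdGaussian_halfspace hv θ θ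
    rw [← hpstar, sub_self, inner_zero_right, zero_div,
      measureReal_gaussianReal_Iic_zero one_ne_zero] at hmass
    linarith [measureReal_sub_le_tvDist_rev (p := p) (q := pstar) (measurableSet_halfspace v θ)]
  have hv : x - θ ≠ 0 := sub_ne_zero.2 hxθ
  have hproj : ⟪x - θ, θ - x⟫ / ‖x - θ‖ = -‖x - θ‖ := by
    rw [← neg_sub x θ, inner_neg_right, real_inner_self_eq_norm_sq, neg_div, sq,
      mul_div_cancel_right₀ _ (norm_ne_zero_iff.2 hv)]
  have hdepthx : tukeyDepth x p ≤ 1 - (gaussianReal 0 1).real (Iic ‖x - θ‖) + ε := by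
    have hmass := measureReal_map_add_stdGaussian_halfspace hv θ x
    rw [← hpstar, hproj, measureReal_gaussianReal_Iic_neg one_ne_zero] at hmass
    linarith [tukeyDepth_le (μ := x) (p := p) hv,
      measureReal_sub_le_tvDist (p := p) (q := pstar) (measurableSet_halfspace (x - θ) x)]
  linarith [hx θ]

/-- **Gaussian corollary of Theorem 2.** Let `p* = N(θ, I_d)` be
the standard Gaussian on `ℝ^d` with mean `θ` (the product of `d` shifted
one-dimensional standard Gaussians), let `TV(p, p*) ≤ ε < 1/4`, and let `x` be
a Tukey median of `p`. Then `Φ(‖x − θ‖) ≤ 1/2 + 2ε`, where `Φ` is the standard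
normal CDF; in particular the Tukey median attains error `O(ε)`. -/
theorem tukey_median_gaussian {d : ℕ} (hd : 1 ≤ d) (θ : Euc d)
    (pstar : Measure (Euc d))
    (hpstar : pstar =
      Measure.map (MeasurableEquiv.toLp 2 (Fin d → ℝ))
        (Measure.pi fun i : Fin d => ProbabilityTheory.gaussianReal (θ i) 1))
    (p : Measure (Euc d)) [IsProbabilityMeasure p]
    (ε : ℝ) (hε : ε < 1 / 4) (htv : tvDist p pstar ≤ ε)
    (x : Euc d) (hx : IsTukeyMedian x p) :
    (∫ s in Set.Iic ‖x - θ‖, Real.exp (-s ^ 2 / 2) / Real.sqrt (2 * Real.pi))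
      ≤ 1 / 2 + 2 * ε :=
  tukey_median_gaussian_general θ pstar hpstar p ε htv x hx

end
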